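/- If a₁ and a₂ are piecewise linear functions on a common interval with b₁ and b₂ breakpoints respectively, then the pointwise minimum min(a₁, a₂) is piecewise linear with at most 2(b₁ + b₂) - 3 breakpoints. -/

import Mathlib

/-!
The breakpoints of `a₁` and `a₂` form a set `S` of at most `b₁ + b₂ - 1` points (they share the left
endpoint), and on each of the `|S| - 1` gaps of `S` both functions are affine. Two affine functions
either agree on the whole gap or cross at most once there, so adding one crossing point per gap
gives a set `T` of at most `2 |S| - 1` points. On a gap of `T` the difference `a₁ - a₂` has no zero
unless it vanishes identically, hence by the intermediate value theorem the minimum is `a₁` or `a₂`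
throughout the gap.
-/

/-- `f` is piecewise linear with `b` breakpoints `t 0 < t 1 < ⋯ < t (b-1)`,
affine between consecutive breakpoints. -/
def PiecewiseLinearOn (f : ℝ → ℝ) (t : ℕ → ℝ) (b : ℕ) : Prop :=
  (∀ i, i + 1 ≤ b - 1 → t i < t (i + 1)) ∧
  ∀ i, i + 1 ≤ b - 1 → ∃ m c : ℝ, ∀ x ∈ Set.Icc (t i) (t (i + 1)), f x = m * x + c

open Set

def AffineOn (f : ℝ → ℝ) (u v : ℝ) : Prop :=
  ∃ m c : ℝ, ∀ x ∈ Icc u v, f x = m * x + c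

def AffineOnGaps (f : ℝ → ℝ) (S : Finset ℝ) : Prop :=
  ∀ u ∈ S, ∀ v ∈ S, u < v → (∀ x ∈ S, x ∉ Ioo u v) → AffineOn f u v

theorem exists_Icc_subset_Icc_succ {α : Type*} [LinearOrder α] (t : ℕ → α) {p q : α} :
    ∀ {n : ℕ}, t 0 ≤ p → p < q → q ≤ t n → (∀ j < n, t j ∉ Ioo p q) →
      ∃ i < n, t i ≤ p ∧ q ≤ t (i + 1)
  | 0, hp, hpq, hq, _ => absurd (hpq.trans_le hq) (not_lt.2 hp)
  | n + 1, hp, hpq, hq, hgap => by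
    by_cases hn : t n ≤ p
    · exact ⟨n, n.lt_succ_self, hn, hq⟩
    · have hqn : q ≤ t n := not_lt.1 fun h => hgap n n.lt_succ_self ⟨not_le.1 hn, h⟩
      obtain ⟨i, hi, h⟩ := exists_Icc_subset_Icc_succ t hp hpq hqn fun j hj => hgap j (by omega)
      exact ⟨i, by omega, h⟩

theorem Finset.exists_enumeration {α : Type*} [LinearOrder α] (T : Finset α) {lo hi : α}
    (hlo : lo ∈ T) (hhi : hi ∈ T) (hT : ↑T ⊆ Set.Icc lo hi) :
    ∃ t : ℕ → α, (∀ i < T.card, t i ∈ T) ∧ t 0 = lo ∧ t (T.card - 1) = hi ∧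
      ∀ i, i + 1 < T.card → t i < t (i + 1) ∧ ∀ x ∈ T, x ∉ Set.Ioo (t i) (t (i + 1)) := by
  obtain ⟨k, hk⟩ : ∃ k, T.card = k + 1 := ⟨T.card - 1, by have := Finset.card_pos.2 ⟨lo, hlo⟩; omega⟩
  set e := T.orderEmbOfFin hk
  let t : ℕ → α := fun i => if h : i < k + 1 then e ⟨i, h⟩ else lo
  have ht : ∀ i (hi : i < k + 1), t i = e ⟨i, hi⟩ := fun i hi => dif_pos hi
  refine ⟨t, fun i hi => ?_, ?_, ?_, fun i hi => ?_⟩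
  · rw [ht i (by omega)]
    exact T.orderEmbOfFin_mem hk _
  · rw [ht 0 k.succ_pos, T.orderEmbOfFin_zero hk k.succ_pos]
    exact le_antisymm (T.min'_le _ hlo) (hT (T.min'_mem _)).1
  · have hlast : e ⟨k, k.lt_succ_self⟩ = T.max' _ := T.orderEmbOfFin_last hk k.succ_pos
    rw [hk, Nat.add_sub_cancel, ht k k.lt_succ_self, hlast]
    exact le_antisymm (hT (T.max'_mem _)).2 (T.le_max' _ hhi)
  · rw [ht i (by omega), ht (i + 1) (by omega)]
    refine ⟨e.strictMono (Fin.mk_lt_mk.2 i.lt_succ_self), fun x hx ⟨hix, hxi⟩ => ?_⟩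
    obtain ⟨j, rfl⟩ : x ∈ Set.range e := by rwa [T.range_orderEmbOfFin hk]
    have := e.lt_iff_lt.1 hix
    have := e.lt_iff_lt.1 hxi
    simp only [Fin.lt_def] at *
    omega

theorem forall_le_or_forall_le_of_forall_ne {f g : ℝ → ℝ} {u v : ℝ}
    (hf : ContinuousOn f (Icc u v)) (hg : ContinuousOn g (Icc u v))
    (hne : ∀ x ∈ Ioo u v, f x ≠ g x) :
    (∀ x ∈ Icc u v, f x ≤ g x) ∨ ∀ x ∈ Icc u v, g x ≤ f x := by
  by_contra! h
  obtain ⟨⟨y, hy, hgfy⟩, ⟨x, hx, hfgx⟩⟩ := h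
  rcases le_total x y with hxy | hyx
  · obtain ⟨z, hz, hfgz⟩ := isPreconnected_Icc.intermediate_value₂ (left_mem_Icc.2 hxy)
      (right_mem_Icc.2 hxy) (hf.mono (Icc_subset_Icc hx.1 hy.2))
      (hg.mono (Icc_subset_Icc hx.1 hy.2)) hfgx.le hgfy.le
    refine hne z ⟨hx.1.trans_lt (hz.1.lt_of_ne ?_), (hz.2.lt_of_ne ?_).trans_le hy.2⟩ hfgz <;>
      rintro rfl
    exacts [hfgx.ne hfgz, hgfy.ne' hfgz]
  · obtain ⟨z, hz, hgfz⟩ := isPreconnected_Icc.intermediate_value₂ (left_mem_Icc.2 hyx)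
      (right_mem_Icc.2 hyx) (hg.mono (Icc_subset_Icc hy.1 hx.2))
      (hf.mono (Icc_subset_Icc hy.1 hx.2)) hgfy.le hfgx.le
    refine hne z ⟨hy.1.trans_lt (hz.1.lt_of_ne ?_), (hz.2.lt_of_ne ?_).trans_le hx.2⟩ hgfz.symm <;>
      rintro rfl
    exacts [hgfy.ne hgfz, hfgx.ne' hgfz]

namespace AffineOn

variable {f g : ℝ → ℝ} {p q u v : ℝ}

theorem mono (h : AffineOn f p q) (hpu : p ≤ u) (hvq : v ≤ q) : AffineOn f u v :=
  let ⟨m, c, h⟩ := h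
  ⟨m, c, fun x hx => h x (Icc_subset_Icc hpu hvq hx)⟩

theorem congr (h : AffineOn f u v) (hfg : EqOn f g (Icc u v)) : AffineOn g u v :=
  let ⟨m, c, h⟩ := h
  ⟨m, c, fun x hx => (hfg hx).symm.trans (h x hx)⟩

theorem continuousOn (h : AffineOn f u v) : ContinuousOn f (Icc u v) :=
  let ⟨_, _, h⟩ := h
  (continuous_const.mul continuous_id |>.add continuous_const).continuousOn.congr h

theorem eqOn_of_eq_of_eq (hf : AffineOn f u v) (hg : AffineOn g u v) {x y : ℝ}
    (hx : x ∈ Icc u v) (hy : y ∈ Icc u v) (hxy : x ≠ y) (hfgx : f x = g x) (hfgy : f y = g y) :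
    EqOn f g (Icc u v) := by
  obtain ⟨m₁, c₁, hf⟩ := hf
  obtain ⟨m₂, c₂, hg⟩ := hg
  rw [hf x hx, hg x hx] at hfgx
  rw [hf y hy, hg y hy] at hfgy
  have hm : m₁ = m₂ := by
    have : (m₁ - m₂) * (x - y) = 0 := by linear_combination hfgx - hfgy
    simpa [sub_eq_zero, hxy] using this
  intro z hz
  rw [hf z hz, hg z hz, hm]
  linear_combination hfgx - hm * x

theorem min (h₁ : AffineOn f p q) (h₂ : AffineOn g p q) (hpu : p ≤ u) (hvq : v ≤ q)
    (hcross : ∀ z ∈ Ioo u v, f z = g z → ∃ x ∈ Icc p q, x ∉ Ioo u v ∧ f x = g x) :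
    AffineOn (fun x => min (f x) (g x)) u v := by
  by_cases hz : ∃ z ∈ Ioo u v, f z = g z
  · obtain ⟨z, hz, hfgz⟩ := hz
    obtain ⟨x, hx, hxz, hfgx⟩ := hcross z hz hfgz
    have hfg := h₁.eqOn_of_eq_of_eq h₂ hx ⟨hpu.trans hz.1.le, hz.2.le.trans hvq⟩
      (fun h => hxz (h ▸ hz)) hfgx hfgz
    exact (h₁.mono hpu hvq).congr fun y hy => by
      rw [hfg (Icc_subset_Icc hpu hvq hy), min_self]
  · push Not at hz
    rcases forall_le_or_forall_le_of_forall_ne (h₁.mono hpu hvq).continuousOn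
      (h₂.mono hpu hvq).continuousOn hz with hle | hge
    · exact (h₁.mono hpu hvq).congr fun y hy => (min_eq_left (hle y hy)).symm
    · exact (h₂.mono hpu hvq).congr fun y hy => (min_eq_right (hge y hy)).symm

end AffineOn

namespace PiecewiseLinearOn

variable {f : ℝ → ℝ} {t : ℕ → ℝ} {b : ℕ}

theorem image_subset_Icc (hf : PiecewiseLinearOn f t b) :
    ↑((Finset.range b).image t) ⊆ Icc (t 0) (t (b - 1)) := by
  have hmono : MonotoneOn t (Iic (b - 1)) :=
    (strictMonoOn_Iic_of_lt_succ fun m hm => by simpa using hf.1 m (by omega)).monotoneOn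
  intro x hx
  obtain ⟨j, hj, rfl⟩ : ∃ j < b, t j = x := by simpa using hx
  exact ⟨hmono (by simp) (by simp; omega) (Nat.zero_le j),
    hmono (by simp; omega) (by simp) (by omega)⟩

theorem affineOnGaps (hf : PiecewiseLinearOn f t b) {S : Finset ℝ}
    (htS : (Finset.range b).image t ⊆ S) (hS : ↑S ⊆ Icc (t 0) (t (b - 1))) :
    AffineOnGaps f S := by
  intro u hu v hv huv hgap
  obtain ⟨i, hi, hiu, hvi⟩ := exists_Icc_subset_Icc_succ t (hS hu).1 huv (hS hv).2 fun j hj =>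
    hgap _ (htS (Finset.mem_image_of_mem t (Finset.mem_range.2 (by omega))))
  exact AffineOn.mono (hf.2 i (by omega)) hiu hvi

end PiecewiseLinearOn

theorem AffineOnGaps.exists_piecewiseLinearOn {f : ℝ → ℝ} {T : Finset ℝ} {lo hi : ℝ}
    (hf : AffineOnGaps f T) (hlo : lo ∈ T) (hhi : hi ∈ T) (hT : ↑T ⊆ Icc lo hi) :
    ∃ t : ℕ → ℝ, t 0 = lo ∧ t (T.card - 1) = hi ∧ PiecewiseLinearOn f t T.card := by
  obtain ⟨t, hmem, ht0, htl, hstep⟩ := T.exists_enumeration hlo hhi hT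
  refine ⟨t, ht0, htl, fun i hi => (hstep i (by omega)).1, fun i hi => ?_⟩
  obtain ⟨hlt, hgap⟩ := hstep i (by omega)
  exact hf _ (hmem i (by omega)) _ (hmem (i + 1) (by omega)) hlt hgap

open Classical in
noncomputable def crossingIn (a₁ a₂ : ℝ → ℝ) (p q : ℝ) : ℝ :=
  if h : ∃ x ∈ Ioo p q, a₁ x = a₂ x then h.choose else p

theorem crossingIn_spec {a₁ a₂ : ℝ → ℝ} {p q : ℝ} (h : ∃ x ∈ Ioo p q, a₁ x = a₂ x) :
    crossingIn a₁ a₂ p q ∈ Ioo p q ∧ a₁ (crossingIn a₁ a₂ p q) = a₂ (crossingIn a₁ a₂ p q) := by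
  rw [crossingIn, dif_pos h]
  exact h.choose_spec

theorem crossingIn_mem_Icc (a₁ a₂ : ℝ → ℝ) {p q : ℝ} (hpq : p ≤ q) :
    crossingIn a₁ a₂ p q ∈ Icc p q := by
  by_cases h : ∃ x ∈ Ioo p q, a₁ x = a₂ x
  · exact Ioo_subset_Icc_self (crossingIn_spec h).1
  · rw [crossingIn, dif_neg h]
    exact left_mem_Icc.2 hpq

theorem AffineOnGaps.exists_refinement_min {a₁ a₂ : ℝ → ℝ} {S : Finset ℝ} {lo hi : ℝ}
    (h₁ : AffineOnGaps a₁ S) (h₂ : AffineOnGaps a₂ S)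
    (hlo : lo ∈ S) (hhi : hi ∈ S) (hS : ↑S ⊆ Icc lo hi) :
    ∃ T : Finset ℝ, S ⊆ T ∧ ↑T ⊆ Icc lo hi ∧ T.card ≤ 2 * S.card - 1 ∧
      AffineOnGaps (fun x => min (a₁ x) (a₂ x)) T := by
  obtain ⟨s, hsS, hs0, hsl, hstep⟩ := S.exists_enumeration hlo hhi hS
  set X := (Finset.range (S.card - 1)).image fun k => crossingIn a₁ a₂ (s k) (s (k + 1))
  have hT : ↑(S ∪ X) ⊆ Icc lo hi := by
    rw [Finset.coe_union, union_subset_iff]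
    refine ⟨hS, fun x hx => ?_⟩
    obtain ⟨k, hk, rfl⟩ : ∃ k < S.card - 1, crossingIn a₁ a₂ (s k) (s (k + 1)) = x := by
      simpa [X] using hx
    have hmem := crossingIn_mem_Icc a₁ a₂ (hstep k (by omega)).1.le
    exact ⟨(hS (hsS k (by omega))).1.trans hmem.1, hmem.2.trans (hS (hsS (k + 1) (by omega))).2⟩
  refine ⟨S ∪ X, Finset.subset_union_left, hT, ?_, ?_⟩
  · have := Finset.card_pos.2 ⟨lo, hlo⟩
    have := Finset.card_union_le S X
    have : X.card ≤ S.card - 1 := Finset.card_image_le.trans (Finset.card_range _).le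
    omega
  intro u hu v hv huv hgap
  obtain ⟨k, hk, hku, hvk⟩ := exists_Icc_subset_Icc_succ s (hs0 ▸ (hT hu).1) huv (hsl ▸ (hT hv).2)
    fun j hj => hgap _ (Finset.mem_union_left _ (hsS j (by omega)))
  obtain ⟨hlt, hSgap⟩ := hstep k (by omega)
  refine AffineOn.min (h₁ _ (hsS k (by omega)) _ (hsS (k + 1) (by omega)) hlt hSgap)
    (h₂ _ (hsS k (by omega)) _ (hsS (k + 1) (by omega)) hlt hSgap) hku hvk fun z hz hfgz => ?_
  obtain ⟨hmem, hfgx⟩ := crossingIn_spec ⟨z, ⟨hku.trans_lt hz.1, hz.2.trans_le hvk⟩, hfgz⟩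
  refine ⟨_, Ioo_subset_Icc_self hmem, hgap _ (Finset.mem_union_right _ ?_), hfgx⟩
  exact Finset.mem_image_of_mem _ (Finset.mem_range.2 hk)

/-- the pointwise minimum of two piecewise linear functions on a
common interval with `b₁` and `b₂` breakpoints is piecewise linear with at most
`2 * (b₁ + b₂) - 3` breakpoints. -/
theorem min_breakpoint_bound
    (a₁ a₂ : ℝ → ℝ) (b₁ b₂ : ℕ) (t1 t2 : ℕ → ℝ)
    (hb₁ : 2 ≤ b₁) (hb₂ : 2 ≤ b₂)
    (hlo : t1 0 = t2 0) (hhi : t1 (b₁ - 1) = t2 (b₂ - 1))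
    (h₁ : PiecewiseLinearOn a₁ t1 b₁) (h₂ : PiecewiseLinearOn a₂ t2 b₂) :
    ∃ (b : ℕ) (t : ℕ → ℝ), b ≤ 2 * (b₁ + b₂) - 3 ∧ t 0 = t1 0 ∧
      t (b - 1) = t1 (b₁ - 1) ∧
      PiecewiseLinearOn (fun x => min (a₁ x) (a₂ x)) t b := by
  set A := (Finset.range b₁).image t1
  set B := (Finset.range b₂).image t2
  have hloA : t1 0 ∈ A := Finset.mem_image_of_mem _ (Finset.mem_range.2 (by omega))
  have hloB : t1 0 ∈ B := hlo ▸ Finset.mem_image_of_mem _ (Finset.mem_range.2 (by omega))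
  have hhiA : t1 (b₁ - 1) ∈ A := Finset.mem_image_of_mem _ (Finset.mem_range.2 (by omega))
  have hS : ↑(A ∪ B) ⊆ Icc (t1 0) (t1 (b₁ - 1)) := by
    rw [Finset.coe_union]
    exact union_subset h₁.image_subset_Icc (hlo ▸ hhi ▸ h₂.image_subset_Icc)
  have hScard : (A ∪ B).card + 1 ≤ b₁ + b₂ := by
    have := Finset.card_union_add_card_inter A B
    have := Finset.card_pos.2 ⟨_, Finset.mem_inter.2 ⟨hloA, hloB⟩⟩
    have : A.card ≤ b₁ := Finset.card_image_le.trans (Finset.card_range _).le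
    have : B.card ≤ b₂ := Finset.card_image_le.trans (Finset.card_range _).le
    omega
  obtain ⟨T, hST, hT, hTcard, hTaff⟩ := AffineOnGaps.exists_refinement_min (S := A ∪ B)
    (h₁.affineOnGaps Finset.subset_union_left hS)
    (h₂.affineOnGaps Finset.subset_union_right (hlo ▸ hhi ▸ hS))
    (Finset.mem_union_left _ hloA) (Finset.mem_union_left _ hhiA) hS
  obtain ⟨t, ht0, htl, ht⟩ := hTaff.exists_piecewiseLinearOn
    (hST (Finset.mem_union_left _ hloA)) (hST (Finset.mem_union_left _ hhiA)) hT
  exact ⟨T.card, t, by omega, ht0, htl, ht⟩
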